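/- arXiv:1006.1054 — 6 statements merged into one kernel-verified Lean document; each statement's English description precedes it below -/
import Mathlib

section
/- Let A be the 3×3 Jordan block over ℂ with eigenvalue λ, |λ| = 1 (A has λ on the diagonal, 1 on the superdiagonal, 0 elsewhere). For x = (x_1, x_2, x_3) ∈ ℂ³, the limit set L(x) is nonempty if and only if x_2 = x_3 = 0, and in that case L(x) = D·x_1 × {0} × {0}, where D is the closure of {λ^n : n ∈ ℕ} in ℂ. -/
open Filter Topology

/-- The l×l Jordan block with eigenvalue lam: lam on the diagonal, 1 on the superdiagonal. -/
noncomputable def jordanBlock (l : ℕ) (lam : ℂ) : Matrix (Fin l) (Fin l) ℂ :=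
  Matrix.of fun i j => if j = i then lam else if (j : ℕ) = (i : ℕ) + 1 then 1 else 0

/-- Limit set L(x) of x under the matrix A. -/
def matL {l : ℕ} (A : Matrix (Fin l) (Fin l) ℂ) (x : Fin l → ℂ) : Set (Fin l → ℂ) :=
  {y | ∃ (k : ℕ → ℕ), StrictMono k ∧ 0 < k 0 ∧
    Tendsto (fun n => (A ^ k n).mulVec x) atTop (𝓝 y)}

/-- Extended limit set J(x) of x under the matrix A. -/
def matJ {l : ℕ} (A : Matrix (Fin l) (Fin l) ℂ) (x : Fin l → ℂ) : Set (Fin l → ℂ) :=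
  {y | ∃ (k : ℕ → ℕ) (z : ℕ → Fin l → ℂ), StrictMono k ∧ 0 < k 0 ∧
    Tendsto z atTop (𝓝 x) ∧ Tendsto (fun n => (A ^ k n).mulVec (z n)) atTop (𝓝 y)}

/-- Extended mixing limit set. -/
def matJmix {l : ℕ} (A : Matrix (Fin l) (Fin l) ℂ) (x : Fin l → ℂ) : Set (Fin l → ℂ) :=
  {y | ∃ (z : ℕ → Fin l → ℂ), Tendsto z atTop (𝓝 x) ∧
    Tendsto (fun n => (A ^ n).mulVec (z n)) atTop (𝓝 y)}

/-- Closure of the set of positive powers of lam. -/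
def Dset (lam : ℂ) : Set ℂ := closure {z | ∃ n : ℕ, 0 < n ∧ z = lam ^ n}

/-! If `x 2 ≠ 0`, the middle coordinate of `Jᵏ x` carries the resonant term `k λ^(k-1) x 2` and
grows linearly; once `x 2 = 0`, the same happens to the first coordinate with `x 1`. So a
convergent subsequence forces `x 1 = x 2 = 0`, and then `x` is an eigenvector: `Jᵏ x = λᵏ x`.
The limit set is therefore `D • x`. Limits of `λ^(k n)` lie in `D` because they are limits of
positive powers; conversely every point of `D` is a cluster point of `(λⁿ)`, because by
compactness of the circle some powers `λʳ` with `r → ∞` tend to `1`, so `λᵐ` is the limit of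
`λ^(m + r)`. -/

open Matrix

section PowersOnTheCircle

variable {lam : ℂ}

lemma exists_subseq_tendsto_pow (hlam : ‖lam‖ = 1) (k : ℕ → ℕ) :
    ∃ a : ℂ, ‖a‖ = 1 ∧ ∃ φ : ℕ → ℕ, StrictMono φ ∧
      Tendsto (fun n => lam ^ k (φ n)) atTop (𝓝 a) := by
  have hmem : ∀ n, lam ^ k n ∈ Metric.sphere (0 : ℂ) 1 := by simp [norm_pow, hlam]
  obtain ⟨a, ha, φ, hφ, h⟩ := (isCompact_sphere (0 : ℂ) 1).tendsto_subseq hmem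
  exact ⟨a, by simpa using ha, φ, hφ, h⟩

lemma exists_tendsto_pow_one (hlam : ‖lam‖ = 1) :
    ∃ r : ℕ → ℕ, Tendsto r atTop atTop ∧ Tendsto (fun n => lam ^ r n) atTop (𝓝 1) := by
  obtain ⟨a, ha, φ, hφ, h⟩ := exists_subseq_tendsto_pow hlam id
  have hlam0 : lam ≠ 0 := by rintro rfl; simp at hlam
  have ha0 : a ≠ 0 := by rintro rfl; simp at ha
  -- `r n = φ (2n) - φ n ≥ n`, and `lam ^ r n = lam ^ φ (2n) / lam ^ φ n → a / a`
  refine ⟨fun n => φ (n + n) - φ n, ?_, ?_⟩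
  · refine tendsto_atTop_mono (fun n => ?_) tendsto_id
    have := hφ.add_le_nat n n
    change n ≤ _
    omega
  · have hdouble : Tendsto (fun n : ℕ => n + n) atTop atTop :=
      tendsto_atTop_mono (fun n => Nat.le_add_left n n) tendsto_id
    have hquot := (h.comp hdouble).div h ha0
    rw [div_self ha0] at hquot
    refine hquot.congr fun n => ?_
    simp only [Pi.div_apply, Function.comp_apply, id]
    rw [pow_sub₀ _ hlam0 (hφ.monotone (Nat.le_add_left n n)), div_eq_mul_inv]

lemma mapClusterPt_pow (hlam : ‖lam‖ = 1) (m : ℕ) :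
    MapClusterPt (lam ^ m) atTop (fun n => lam ^ n) := by
  obtain ⟨r, hr, h⟩ := exists_tendsto_pow_one hlam
  have hshift : Tendsto (fun n => lam ^ (m + r n)) atTop (𝓝 (lam ^ m)) := by
    simpa [pow_add] using h.const_mul (lam ^ m)
  exact MapClusterPt.of_comp (tendsto_atTop_mono (fun n => Nat.le_add_left _ m) hr)
    hshift.mapClusterPt

lemma mapClusterPt_of_mem_Dset (hlam : ‖lam‖ = 1) {d : ℂ} (hd : d ∈ Dset lam) :
    MapClusterPt d atTop (fun n => lam ^ n) := by
  refine closure_minimal ?_ isClosed_setOfPred_clusterPt hd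
  rintro _ ⟨m, -, rfl⟩
  exact mapClusterPt_pow hlam m

lemma exists_strictMono_tendsto_pow (hlam : ‖lam‖ = 1) {d : ℂ} (hd : d ∈ Dset lam) :
    ∃ k : ℕ → ℕ, StrictMono k ∧ 0 < k 0 ∧ Tendsto (fun n => lam ^ k n) atTop (𝓝 d) := by
  obtain ⟨ψ, hψ, h⟩ := (mapClusterPt_of_mem_Dset hlam hd).tendsto_subseq
  exact ⟨fun n => ψ (n + 1), hψ.comp (strictMono_id.add_const 1),
    (Nat.zero_le _).trans_lt (hψ Nat.zero_lt_one), h.comp (tendsto_add_atTop_nat 1)⟩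

lemma self_mem_Dset (lam : ℂ) : lam ∈ Dset lam :=
  subset_closure ⟨1, one_pos, (pow_one lam).symm⟩

end PowersOnTheCircle

lemma Matrix.pow_mulVec_of_mulVec_eq_smul {R n : Type*} [CommSemiring R] [Fintype n]
    [DecidableEq n] {A : Matrix n n R} {x : n → R} {lam : R} (hx : A *ᵥ x = lam • x) (k : ℕ) :
    (A ^ k) *ᵥ x = lam ^ k • x := by
  induction k with
  | zero => simp
  | succ k ih => rw [pow_succ, ← mulVec_mulVec, hx, mulVec_smul, ih, pow_succ', mul_smul]

theorem matL_eq_image_of_mulVec_eq_smul {l : ℕ} {A : Matrix (Fin l) (Fin l) ℂ} {x : Fin l → ℂ}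
    {lam : ℂ} (hlam : ‖lam‖ = 1) (hx : A *ᵥ x = lam • x) :
    matL A x = (fun d => d • x) '' Dset lam := by
  simp only [matL, Matrix.pow_mulVec_of_mulVec_eq_smul hx]
  ext y
  constructor
  · rintro ⟨k, hk, hk0, hy⟩
    obtain ⟨c, -, φ, hφ, hc⟩ := exists_subseq_tendsto_pow hlam k
    have hcD : c ∈ Dset lam := mem_closure_of_tendsto hc (Eventually.of_forall fun n =>
      ⟨k (φ n), hk0.trans_le (hk.monotone (Nat.zero_le _)), rfl⟩)
    exact ⟨c, hcD, tendsto_nhds_unique (hc.smul_const x) (hy.comp hφ.tendsto_atTop)⟩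
  · rintro ⟨d, hd, rfl⟩
    obtain ⟨k, hk, hk0, h⟩ := exists_strictMono_tendsto_pow hlam hd
    exact ⟨k, hk, hk0, h.smul_const x⟩

section Recurrences

variable {lam c : ℂ} {u : ℕ → ℂ}

lemma eq_pow_mul_of_succ_eq (hu : ∀ k, u (k + 1) = lam * u k) (k : ℕ) : u k = lam ^ k * u 0 := by
  induction k with
  | zero => simp
  | succ k ih => rw [hu, ih, pow_succ']; ring

lemma eq_zero_of_tendsto_of_succ_eq (hlam : ‖lam‖ = 1)
    (hu : ∀ k, u (k + 1) = lam * u k + lam ^ k * c) {k : ℕ → ℕ} (hk : StrictMono k) {y : ℂ}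
    (h : Tendsto (u ∘ k) atTop (𝓝 y)) : c = 0 := by
  have hclosed : ∀ m : ℕ, lam * u m = lam ^ (m + 1) * u 0 + m * lam ^ m * c := by
    intro m
    induction m with
    | zero => simp
    | succ m ih => rw [hu]; push_cast; linear_combination lam * ih
  have hlower : ∀ m : ℕ, m * ‖c‖ - ‖u 0‖ ≤ ‖u m‖ := by
    intro m
    have hforced : (m : ℂ) * lam ^ m * c = lam * u m - lam ^ (m + 1) * u 0 := by
      rw [hclosed]; ring
    have := norm_sub_le (lam * u m) (lam ^ (m + 1) * u 0)
    simp only [← hforced, norm_mul, norm_pow, hlam, one_pow, one_mul, mul_one,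
      Complex.norm_natCast] at this
    linarith
  by_contra hc
  have hlin : Tendsto (fun n => (k n : ℝ) * ‖c‖ - ‖u 0‖) atTop atTop :=
    tendsto_atTop_add_const_right _ _ <|
      (tendsto_natCast_atTop_atTop.comp hk.tendsto_atTop).atTop_mul_const (norm_pos_iff.2 hc)
  exact not_tendsto_atTop_of_tendsto_nhds h.norm
    (tendsto_atTop_mono (fun n => hlower (k n)) hlin)

end Recurrences

section JordanBlockThree

variable {lam : ℂ} {x : Fin 3 → ℂ}

lemma jordanBlock_three_mulVec (lam : ℂ) (v : Fin 3 → ℂ) :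
    jordanBlock 3 lam *ᵥ v = ![lam * v 0 + v 1, lam * v 1 + v 2, lam * v 2] := by
  funext i
  fin_cases i <;> simp [jordanBlock, mulVec, dotProduct, Fin.sum_univ_three]

lemma jordanBlock_three_mulVec_eq_smul (hx : x 1 = 0 ∧ x 2 = 0) :
    jordanBlock 3 lam *ᵥ x = lam • x := by
  funext i
  fin_cases i <;> simp [jordanBlock_three_mulVec, hx.1, hx.2]

theorem eq_zero_of_tendsto_jordanBlock_three_pow_mulVec (hlam : ‖lam‖ = 1) {k : ℕ → ℕ}
    (hk : StrictMono k) {y : Fin 3 → ℂ}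
    (h : Tendsto (fun n => (jordanBlock 3 lam ^ k n) *ᵥ x) atTop (𝓝 y)) :
    x 1 = 0 ∧ x 2 = 0 := by
  set v : ℕ → Fin 3 → ℂ := fun m => jordanBlock 3 lam ^ m *ᵥ x
  have hv0 : v 0 = x := by simp [v]
  have hstep : ∀ m, v (m + 1) = ![lam * v m 0 + v m 1, lam * v m 1 + v m 2, lam * v m 2] :=
    fun m => by simp only [v, pow_succ', ← mulVec_mulVec, jordanBlock_three_mulVec]
  have hcoord (i : Fin 3) : Tendsto ((fun m => v m i) ∘ k) atTop (𝓝 (y i)) :=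
    tendsto_pi_nhds.1 h i
  have hv2 : ∀ m, v m 2 = lam ^ m * x 2 := fun m => by
    simpa [hv0] using eq_pow_mul_of_succ_eq (u := fun m => v m 2) (fun m => by simp [hstep]) m
  have hx2 : x 2 = 0 := eq_zero_of_tendsto_of_succ_eq hlam (u := fun m => v m 1)
    (fun m => by simp [hstep, hv2]) hk (hcoord 1)
  have hv1 : ∀ m, v m 1 = lam ^ m * x 1 := fun m => by
    simpa [hv0] using
      eq_pow_mul_of_succ_eq (u := fun m => v m 1) (fun m => by simp [hstep, hv2, hx2]) m
  exact ⟨eq_zero_of_tendsto_of_succ_eq hlam (u := fun m => v m 0)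
    (fun m => by simp [hstep, hv1]) hk (hcoord 0), hx2⟩

end JordanBlockThree

theorem stmt3 (lam : ℂ) (hlam : ‖lam‖ = 1) (x : Fin 3 → ℂ) :
    ((matL (jordanBlock 3 lam) x).Nonempty ↔ x 1 = 0 ∧ x 2 = 0) ∧
    (x 1 = 0 ∧ x 2 = 0 →
      matL (jordanBlock 3 lam) x =
        {y | (∃ d ∈ Dset lam, y 0 = d * x 0) ∧ y 1 = 0 ∧ y 2 = 0}) := by
  have hL (hx : x 1 = 0 ∧ x 2 = 0) :=
    matL_eq_image_of_mulVec_eq_smul hlam (jordanBlock_three_mulVec_eq_smul hx)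
  refine ⟨⟨fun ⟨y, k, hk, _, h⟩ => eq_zero_of_tendsto_jordanBlock_three_pow_mulVec hlam hk h,
    fun hx => hL hx ▸ Set.Nonempty.image _ ⟨lam, self_mem_Dset lam⟩⟩, fun hx => ?_⟩
  rw [hL hx]
  ext y
  constructor
  · rintro ⟨d, hd, rfl⟩
    exact ⟨⟨d, hd, rfl⟩, by simp [hx.1], by simp [hx.2]⟩
  · rintro ⟨⟨d, hd, hy0⟩, hy1, hy2⟩
    refine ⟨d, hd, funext fun i => ?_⟩
    fin_cases i <;> simp [hy0, hy1, hy2, hx.1, hx.2]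
end

section
/- Let A be the 4×4 Jordan block over ℂ with eigenvalue λ, |λ| = 1. Then J(0) = ℂ² × {0} × {0}, i.e., the extended limit set of the zero vector under A consists exactly of vectors (y_1, y_2, 0, 0). -/
open Filter Topology

/-!
Write `A = λ (1 + λ⁻¹ N)` with `N` the nilpotent shift, so that `A ^ k = λ ^ k (1 + λ⁻¹ N) ^ k` and the
entries of `(1 + λ⁻¹ N) ^ k` are `C(k, j) λ⁻ʲ`. As `|λ ^ k| = 1`, only the polynomial growth in `k`
matters. If `z → 0` and `w = A ^ k z → y`, then `w₃ = λ ^ k z₃` forces `y₃ = 0`; and `k⁻² w₀` minus a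
suitable multiple of `w₂` cancels the cubic `z₃` term, which forces `y₂ = 0`. Conversely, for `y = (y₀, y₁, 0, 0)`
solve for `z = λ⁻ᵏ (0, 0, p, q)` with `(A ^ k z)₀ = y₀`, `(A ^ k z)₁ = y₁`: Cramer's rule gives
`p = O(1/k)` and `q = O(1/k²)`, so `z → 0` and the remaining coordinates of `A ^ k z` tend to `0`.
-/

open Matrix

lemma jordanBlock_four_mulVec (lam : ℂ) (x : Fin 4 → ℂ) :
    jordanBlock 4 lam *ᵥ x = ![lam * x 0 + x 1, lam * x 1 + x 2, lam * x 2 + x 3, lam * x 3] := by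
  ext i
  fin_cases i <;> simp [jordanBlock, mulVec, dotProduct, Fin.sum_univ_four]

lemma jordanBlock_four_pow_mulVec {lam : ℂ} (hlam : lam ≠ 0) (k : ℕ) (x : Fin 4 → ℂ) :
    jordanBlock 4 lam ^ k *ᵥ x = lam ^ k •
      ![x 0 + k / lam * x 1 + k * (k - 1) / (2 * lam ^ 2) * x 2
          + k * (k - 1) * (k - 2) / (6 * lam ^ 3) * x 3,
        x 1 + k / lam * x 2 + k * (k - 1) / (2 * lam ^ 2) * x 3,
        x 2 + k / lam * x 3,
        x 3] := by
  induction k with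
  | zero => ext i; fin_cases i <;> simp
  | succ k ih =>
    rw [pow_succ', ← mulVec_mulVec, ih, mulVec_smul, jordanBlock_four_mulVec]
    ext i
    fin_cases i <;>
      simp only [Fin.isValue, Fin.zero_eta, Fin.mk_one, Fin.reduceFinMk, cons_val_zero, cons_val_one,
        cons_val, Pi.smul_apply, smul_eq_mul, Nat.cast_add, Nat.cast_one, pow_succ] <;>
      field_simp <;> ring

lemma eq_zero_of_tendsto_of_norm_eq {E F : Type*} [SeminormedAddGroup E] [NormedAddGroup F]
    {α : Type*} {l : Filter α} [l.NeBot] {a : α → F} {b : α → E} {x : F}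
    (ha : Tendsto a l (𝓝 x)) (hb : Tendsto b l (𝓝 0)) (h : ∀ n, ‖a n‖ = ‖b n‖) : x = 0 :=
  norm_eq_zero.1 <| tendsto_nhds_unique ha.norm <| by simpa [h] using hb.norm

theorem matJ_jordanBlock_four_zero_subset {lam : ℂ} (hlam : ‖lam‖ = 1) :
    matJ (jordanBlock 4 lam) 0 ⊆ {y | y 2 = 0 ∧ y 3 = 0} := by
  rintro y ⟨k, z, hk, hk0, hz, hw⟩
  have hlam0 : lam ≠ 0 := norm_ne_zero_iff.1 (by simp [hlam])
  have hk_ne (n : ℕ) : (k n : ℂ) ≠ 0 :=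
    Nat.cast_ne_zero.2 (hk0.trans_le (hk.monotone n.zero_le)).ne'
  have ht : Tendsto (fun n => (k n : ℂ)⁻¹) atTop (𝓝 0) :=
    tendsto_inv_atTop_nhds_zero_nat.comp hk.tendsto_atTop
  have hz' (i : Fin 4) : Tendsto (fun n => z n i) atTop (𝓝 0) := tendsto_pi_nhds.1 hz i
  have hw' (i : Fin 4) : Tendsto (fun n => (jordanBlock 4 lam ^ k n *ᵥ z n) i) atTop (𝓝 (y i)) :=
    tendsto_pi_nhds.1 hw i
  have hnorm (n : ℕ) (c : ℂ) : ‖lam ^ k n * c‖ = ‖c‖ := by simp [hlam]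
  constructor
  · -- with `t = 1/k`, the combination `t² w₀ - (1 - t)(1 - 2t)/(6λ²) w₂` of `w = A^k z` has no `z₃`
    -- term, and equals `λ^k` times a combination of `z₀, z₁, z₂` with bounded coefficients
    have hlim := ((show Continuous fun p : ℂ × ℂ × ℂ =>
        p.1 ^ 2 * p.2.1 - (1 - p.1) * (1 - 2 * p.1) / (6 * lam ^ 2) * p.2.2 by fun_prop).tendsto
        (0, y 0, y 2)).comp (ht.prodMk_nhds ((hw' 0).prodMk_nhds (hw' 2)))
    have hsmall := ((show Continuous fun p : ℂ × ℂ × ℂ × ℂ =>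
        p.1 ^ 2 * p.2.1 + p.1 / lam * p.2.2.1 + (1 - p.1 ^ 2) / (3 * lam ^ 2) * p.2.2.2 by
          fun_prop).tendsto (0, 0, 0, 0)).comp
        (ht.prodMk_nhds ((hz' 0).prodMk_nhds ((hz' 1).prodMk_nhds (hz' 2))))
    have := eq_zero_of_tendsto_of_norm_eq hlim (by simpa using hsmall) fun n => by
      simp only [Function.comp_apply, jordanBlock_four_pow_mulVec hlam0]
      rw [← hnorm n (_ + _ + _)]
      congr 1
      simp only [Fin.isValue, Pi.smul_apply, cons_val_zero, cons_val, smul_eq_mul]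
      field_simp [hk_ne n]
      ring
    simpa [hlam0] using this
  · exact eq_zero_of_tendsto_of_norm_eq (hw' 3) (hz' 3) fun n => by
      simp [jordanBlock_four_pow_mulVec hlam0, hlam]

theorem subset_matJ_jordanBlock_four_zero {lam : ℂ} (hlam : ‖lam‖ = 1) :
    {y | y 2 = 0 ∧ y 3 = 0} ⊆ matJ (jordanBlock 4 lam) 0 := by
  rintro y ⟨hy2, hy3⟩
  have hlam0 : lam ≠ 0 := norm_ne_zero_iff.1 (by simp [hlam])
  -- for `t = 1/k`, `(p t, t * r t)` solves the `2 × 2` system for the last two coordinates of `λᵏ z`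
  set p : ℂ → ℂ := fun t => lam * t * (6 * lam * t * y 0 - 2 * (1 - 2 * t) * y 1) / (1 + t)
  set r : ℂ → ℂ := fun t => 6 * lam ^ 2 * t * ((1 - t) * y 1 - 2 * lam * t * y 0) / ((1 - t) * (1 + t))
  set v : ℂ → Fin 4 → ℂ := fun t => ![0, 0, p t, t * r t]
  have hv : Tendsto v (𝓝 0) (𝓝 0) := by
    have : ContinuousAt v 0 := by fun_prop (disch := norm_num)
    simpa [v, p, r, ← cons_zero_zero] using this.tendsto
  have hF : Tendsto (fun t => ![y 0, y 1, p t + r t / lam, t * r t]) (𝓝 0) (𝓝 y) := by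
    have : ContinuousAt (fun t => ![y 0, y 1, p t + r t / lam, t * r t]) 0 := by
      fun_prop (disch := norm_num)
    convert this.tendsto using 2
    ext i
    fin_cases i <;> simp [p, r, hy2, hy3]
  have ht : Tendsto (fun n : ℕ => ((n : ℂ) + 2)⁻¹) atTop (𝓝 0) := by
    simpa [Function.comp_def] using
      (tendsto_inv_atTop_nhds_zero_nat (𝕜 := ℂ)).comp (tendsto_add_atTop_nat 2)
  refine ⟨fun n => n + 2, fun n => (lam ^ (n + 2))⁻¹ • v ((n : ℂ) + 2)⁻¹,
    strictMono_id.add_const 2, by norm_num, ?_, ?_⟩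
  · rw [tendsto_zero_iff_norm_tendsto_zero]
    simpa [norm_smul, hlam] using (hv.comp ht).norm
  · refine (hF.comp ht).congr fun n => ?_
    have hk1 : (n : ℂ) + 1 ≠ 0 := by exact_mod_cast n.succ_ne_zero
    have hk2 : (n : ℂ) + 2 ≠ 0 := by exact_mod_cast (n + 1).succ_ne_zero
    have hk3 : (n : ℂ) + 3 ≠ 0 := by exact_mod_cast (n + 2).succ_ne_zero
    simp only [Function.comp_apply]
    rw [mulVec_smul, jordanBlock_four_pow_mulVec hlam0, smul_smul,
      inv_mul_cancel₀ (pow_ne_zero _ hlam0), one_smul]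
    ext i
    have h1 : 1 - ((n : ℂ) + 2)⁻¹ = (n + 1) / (n + 2) := by field_simp; ring
    have h2 : 1 + ((n : ℂ) + 2)⁻¹ = (n + 3) / (n + 2) := by field_simp; ring
    fin_cases i <;>
      simp only [Fin.isValue, Fin.zero_eta, Fin.mk_one, Fin.reduceFinMk, cons_val_zero, cons_val_one,
        cons_val, Nat.cast_add, Nat.cast_ofNat, add_sub_cancel_right, mul_zero, add_zero, zero_add,
        v, p, r, h1, h2] <;>
      field_simp <;> ring

theorem stmt7 (lam : ℂ) (hlam : ‖lam‖ = 1) :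
    matJ (jordanBlock 4 lam) 0 = {y | y 2 = 0 ∧ y 3 = 0} :=
  (matJ_jordanBlock_four_zero_subset hlam).antisymm (subset_matJ_jordanBlock_four_zero hlam)
end

section
/- Let A be the 3×3 Jordan block over ℂ with eigenvalue λ, |λ| > 1. Then for every y ∈ ℂ³ there exists a sequence (x_n) in ℂ³ with x_n → 0 and A^n x_n → y. In particular J(0) = J^{mix}(0) = ℂ³. -/
open Filter Topology

/-!
Write `A = λ + S` with `S` the nilpotent shift. Then `A` is invertible and `A⁻¹ = λ⁻¹ (1 + M)`
with `M = λ A⁻¹ - 1 = -A⁻¹ S` nilpotent, so the binomial theorem gives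
`A⁻ⁿ = λ⁻ⁿ ∑_{k < l} C(n, k) Mᵏ`, and each coefficient `C(n, k) λ⁻ⁿ` tends to `0` because
`|λ| > 1`. Hence `xₙ := A⁻ⁿ y` tends to `0` while `Aⁿ xₙ = y` exactly.
-/

theorem one_add_pow_eq_sum_range_of_pow_eq_zero {R : Type*} [Semiring R] {N : R} {m : ℕ}
    (hm : N ^ m = 0) (n : ℕ) :
    (1 + N) ^ n = ∑ k ∈ Finset.range m, n.choose k • N ^ k := by
  have hfinsum : ∀ s : Finset ℕ, (∀ k, n.choose k • N ^ k ≠ 0 → k ∈ s) →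
      ∑ᶠ k, n.choose k • N ^ k = ∑ k ∈ s, n.choose k • N ^ k :=
    fun s hs => finsum_eq_sum_of_support_subset _ hs
  calc (1 + N) ^ n = ∑ k ∈ Finset.range (n + 1), n.choose k • N ^ k := by
        simp [add_comm 1 N, (Commute.one_right N).add_pow, nsmul_eq_mul, Nat.cast_comm]
    _ = ∑ k ∈ Finset.range m, n.choose k • N ^ k := by
        rw [← hfinsum, hfinsum]
        · intro k hk
          by_contra h
          simp [pow_eq_zero_of_le (not_lt.1 (Finset.mem_range.not.1 h)) hm] at hk
        · intro k hk
          by_contra h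
          simp [Nat.choose_eq_zero_of_lt (Nat.lt_of_not_le (Finset.mem_range_succ_iff.not.1 h))]
            at hk

section UnipotentDecay

variable {𝕜 : Type*} [NormedField 𝕜]

theorem tendsto_natCast_choose_mul_pow_of_norm_lt_one (k : ℕ) {c : 𝕜} (hc : ‖c‖ < 1) :
    Tendsto (fun n : ℕ => (n.choose k : 𝕜) * c ^ n) atTop (𝓝 0) := by
  refine squeeze_zero_norm (fun n => ?_)
    (tendsto_pow_const_mul_const_pow_of_abs_lt_one k (r := ‖c‖) (by rwa [abs_norm]))
  calc ‖(n.choose k : 𝕜) * c ^ n‖ ≤ (n.choose k : ℝ) * ‖c‖ ^ n := by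
        rw [norm_mul, norm_pow]
        gcongr
        simpa using (n.choose k).norm_cast_le (α := 𝕜)
    _ ≤ (n : ℝ) ^ k * ‖c‖ ^ n := by
        gcongr
        exact_mod_cast Nat.choose_le_pow n k

variable {R : Type*} [Ring R] [Algebra 𝕜 R] [TopologicalSpace R] [ContinuousAdd R]
  [ContinuousSMul 𝕜 R]

theorem tendsto_pow_smul_one_add_pow_of_isNilpotent {c : 𝕜} (hc : ‖c‖ < 1) {N : R}
    (hN : IsNilpotent N) : Tendsto (fun n : ℕ => c ^ n • (1 + N) ^ n) atTop (𝓝 0) := by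
  obtain ⟨m, hm⟩ := hN
  have hsum : ∀ n : ℕ, c ^ n • (1 + N) ^ n =
      ∑ k ∈ Finset.range m, ((n.choose k : 𝕜) * c ^ n) • N ^ k := fun n => by
    simp only [one_add_pow_eq_sum_range_of_pow_eq_zero hm, Finset.smul_sum, mul_smul,
      Nat.cast_smul_eq_nsmul, smul_comm (c ^ n)]
  simp only [hsum]
  simpa using tendsto_finsetSum (Finset.range m) fun k _ =>
    (tendsto_natCast_choose_mul_pow_of_norm_lt_one k hc).smul_const (N ^ k)

theorem tendsto_units_inv_pow_of_isNilpotent_sub_algebraMap {c : 𝕜} (hc : 1 < ‖c‖) (u : Rˣ)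
    (hu : IsNilpotent ((u : R) - algebraMap 𝕜 R c)) :
    Tendsto (fun n : ℕ => (↑u⁻¹ : R) ^ n) atTop (𝓝 0) := by
  have hc0 : c ≠ 0 := norm_pos_iff.1 (one_pos.trans hc)
  have hM : IsNilpotent (c • (↑u⁻¹ : R) - 1) := by
    have hcomm : Commute (↑u⁻¹ : R) ((u : R) - algebraMap 𝕜 R c) :=
      ((Commute.refl (u : R)).sub_right (Algebra.commutes c (u : R)).symm).units_inv_left
    convert (hcomm.isNilpotent_mul_left hu).neg using 1
    rw [mul_sub, Units.inv_mul, ← Algebra.commutes, ← Algebra.smul_def, neg_sub]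
  have hinv : ∀ n : ℕ, (↑u⁻¹ : R) ^ n = c⁻¹ ^ n • (1 + (c • (↑u⁻¹ : R) - 1)) ^ n :=
    fun n => by rw [← smul_pow, add_sub_cancel, smul_smul, inv_mul_cancel₀ hc0, one_smul]
  simpa only [hinv] using tendsto_pow_smul_one_add_pow_of_isNilpotent
    (by rwa [norm_inv, inv_lt_one₀ (one_pos.trans hc)]) hM

end UnipotentDecay

section LimitSets

open Matrix

variable {l : ℕ}

theorem matJmix_subset_matJ (A : Matrix (Fin l) (Fin l) ℂ) (x : Fin l → ℂ) :
    matJmix A x ⊆ matJ A x := fun _ ⟨z, hz, hAz⟩ =>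
  ⟨(· + 1), z ∘ (· + 1), strictMono_id.add_const 1, Nat.succ_pos 0,
    hz.comp (tendsto_add_atTop_nat 1), hAz.comp (tendsto_add_atTop_nat 1)⟩

theorem matJmix_units_zero_eq_univ_of_tendsto_inv_pow (U : (Matrix (Fin l) (Fin l) ℂ)ˣ)
    (hU : Tendsto (fun n : ℕ => (↑U⁻¹ : Matrix (Fin l) (Fin l) ℂ) ^ n) atTop (𝓝 0)) :
    matJmix (U : Matrix (Fin l) (Fin l) ℂ) 0 = Set.univ := by
  refine Set.eq_univ_of_forall fun y =>
    ⟨fun n => (↑U⁻¹ : Matrix (Fin l) (Fin l) ℂ) ^ n *ᵥ y, ?_, tendsto_const_nhds.congr fun n => ?_⟩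
  · exact ((continuous_id.matrix_mulVec continuous_const).tendsto' 0 0 (zero_mulVec y)).comp hU
  · rw [mulVec_mulVec, ← Units.val_pow_eq_pow_val, ← Units.val_pow_eq_pow_val, ← Units.val_mul,
      inv_pow, mul_inv_cancel, Units.val_one, one_mulVec]

end LimitSets

section JordanBlock

open Matrix

theorem jordanBlock_eq_algebraMap_add (l : ℕ) (lam : ℂ) :
    jordanBlock l lam = algebraMap ℂ _ lam + jordanBlock l 0 := by
  ext i j
  simp only [jordanBlock, Matrix.add_apply, algebraMap_matrix_apply, of_apply]
  split_ifs <;> simp_all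

theorem jordanBlock_zero_pow_apply (l k : ℕ) (i j : Fin l) :
    (jordanBlock l 0 ^ k) i j = if (j : ℕ) = i + k then 1 else 0 := by
  induction k generalizing j with
  | zero => simp [one_apply, Fin.ext_iff, eq_comm]
  | succ k ih =>
    rw [pow_succ, mul_apply]
    simp only [ih]
    simp only [jordanBlock, of_apply, ite_mul, one_mul, zero_mul]
    split_ifs with h
    · rw [Finset.sum_eq_single ⟨i + k, by omega⟩
        (fun x _ hx => by simp [Fin.ext_iff] at hx; simp [hx]) (by simp)]
      simp [Fin.ext_iff, show (j : ℕ) = i + k + 1 by omega]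
    · refine Finset.sum_eq_zero fun x _ => ?_
      split_ifs <;> first | rfl | omega

theorem isNilpotent_jordanBlock_zero (l : ℕ) : IsNilpotent (jordanBlock l 0) :=
  ⟨l, ext fun i j => by simp [jordanBlock_zero_pow_apply]; omega⟩

theorem isUnit_jordanBlock (l : ℕ) {lam : ℂ} (hlam : lam ≠ 0) : IsUnit (jordanBlock l lam) := by
  rw [jordanBlock_eq_algebraMap_add]
  exact (isNilpotent_jordanBlock_zero l).isUnit_add_left_of_commute
    ((isUnit_iff_ne_zero.2 hlam).map _) (Algebra.commutes lam _).symm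

theorem matJmix_jordanBlock_zero_eq_univ (l : ℕ) {lam : ℂ} (hlam : 1 < ‖lam‖) :
    matJmix (jordanBlock l lam) 0 = Set.univ := by
  obtain ⟨U, hU⟩ := isUnit_jordanBlock l (norm_pos_iff.1 (one_pos.trans hlam))
  rw [← hU]
  refine matJmix_units_zero_eq_univ_of_tendsto_inv_pow U
    (tendsto_units_inv_pow_of_isNilpotent_sub_algebraMap hlam U ?_)
  rw [hU, jordanBlock_eq_algebraMap_add, add_sub_cancel_left]
  exact isNilpotent_jordanBlock_zero l

end JordanBlock

theorem stmt11 (lam : ℂ) (hlam : 1 < ‖lam‖) :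
    (∀ y : Fin 3 → ℂ, ∃ z : ℕ → Fin 3 → ℂ, Tendsto z atTop (𝓝 0) ∧
      Tendsto (fun n => ((jordanBlock 3 lam) ^ n).mulVec (z n)) atTop (𝓝 y)) ∧
    matJ (jordanBlock 3 lam) 0 = Set.univ ∧
    matJmix (jordanBlock 3 lam) 0 = Set.univ := by
  have hmix := matJmix_jordanBlock_zero_eq_univ 3 hlam
  exact ⟨Set.eq_univ_iff_forall.1 hmix,
    Set.eq_univ_of_univ_subset (hmix ▸ matJmix_subset_matJ _ _), hmix⟩
end

section
/- Let B : ℂ^l → ℂ^l be a linear map all of whose eigenvalues have modulus greater than 1. Then J(0) = ℂ^l, i.e., every vector of ℂ^l belongs to the extended limit set of the zero vector under B. -/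
open Filter Topology

/-!
No eigenvalue of `B` vanishes, so `B` is invertible, and the spectrum of `B⁻¹` lies in the open
unit disc. By Gelfand's formula `(B⁻¹)^k → 0`, so `x_k = B^{-k} y → 0` while `B^k x_k = y` for
every `k`.
-/

section SpectralRadius

variable {𝕜 A : Type*} [NormedField 𝕜]

theorem norm_lt_one_of_mem_spectrum_inv [Ring A] [Algebra 𝕜 A] {u : Aˣ}
    (h : ∀ μ ∈ spectrum 𝕜 (u : A), 1 < ‖μ‖) {μ : 𝕜} (hμ : μ ∈ spectrum 𝕜 (↑u⁻¹ : A)) :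
    ‖μ‖ < 1 := by
  rw [← spectrum.map_inv, Set.mem_inv] at hμ
  have h_inv := h _ hμ
  rw [norm_inv, one_lt_inv_iff₀] at h_inv
  exact h_inv.2

theorem spectralRadius_lt_one_of_forall_norm_lt_one [NormedRing A] [NormedAlgebra 𝕜 A]
    [CompleteSpace A] [ProperSpace 𝕜] {a : A} (h : ∀ μ ∈ spectrum 𝕜 a, ‖μ‖ < 1) : spectralRadius 𝕜 a < 1 := by
  rcases (spectrum 𝕜 a).eq_empty_or_nonempty with hempty | hne
  · simp [spectralRadius, hempty]
  · simpa using spectrum.spectralRadius_lt_of_forall_lt_of_nonempty hne (r := 1)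
      fun μ hμ => by exact_mod_cast h μ hμ

theorem tendsto_pow_atTop_nhds_zero_of_spectralRadius_lt_one [NormedRing A] [NormedAlgebra ℂ A]
    [CompleteSpace A] {a : A} (h : spectralRadius ℂ a < 1) : Tendsto (a ^ ·) atTop (𝓝 0) := by
  obtain ⟨c, hρc, hc1⟩ := ENNReal.lt_iff_exists_nnreal_btwn.mp h
  have hbound : ∀ᶠ n : ℕ in atTop, ‖a ^ n‖ ≤ (c : ℝ) ^ n := by
    filter_upwards [(spectrum.pow_nnnorm_pow_one_div_tendsto_nhds_spectralRadius a).eventually_lt_const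
      hρc, eventually_gt_atTop 0] with n hn hn0
    rw [one_div, ENNReal.rpow_inv_lt_iff (by positivity), ENNReal.rpow_natCast] at hn
    exact_mod_cast hn.le
  rw [tendsto_zero_iff_norm_tendsto_zero]
  exact squeeze_zero' (.of_forall fun _ => norm_nonneg _) hbound
    (tendsto_pow_atTop_nhds_zero_of_lt_one c.coe_nonneg (by exact_mod_cast hc1))

end SpectralRadius

theorem Matrix.tendsto_pow_atTop_nhds_zero_of_forall_norm_lt_one {n : Type*} [Fintype n]
    [DecidableEq n] (M : Matrix n n ℂ) (h : ∀ μ ∈ spectrum ℂ M, ‖μ‖ < 1) :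
    Tendsto (M ^ ·) atTop (𝓝 0) := by
  -- any Banach algebra norm inducing the entrywise topology would do
  let := Matrix.linftyOpNormedRing (n := n) (α := ℂ)
  let := Matrix.linftyOpNormedAlgebra (n := n) (R := ℂ) (α := ℂ)
  exact tendsto_pow_atTop_nhds_zero_of_spectralRadius_lt_one
    (spectralRadius_lt_one_of_forall_norm_lt_one h)

theorem matJ_zero_eq_univ_of_tendsto_inv_pow {l : ℕ} (u : (Matrix (Fin l) (Fin l) ℂ)ˣ)
    (h : Tendsto ((↑u⁻¹ : Matrix (Fin l) (Fin l) ℂ) ^ ·) atTop (𝓝 0)) :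
    matJ (u : Matrix (Fin l) (Fin l) ℂ) 0 = Set.univ := by
  refine Set.eq_univ_of_forall fun y =>
    ⟨(· + 1), fun k => ((↑u⁻¹ : Matrix (Fin l) (Fin l) ℂ) ^ (k + 1)).mulVec y,
      strictMono_id.add_const 1, Nat.one_pos, ?_, ?_⟩
  · exact ((continuous_id.matrix_mulVec continuous_const).tendsto' 0 0 (Matrix.zero_mulVec y)).comp
      (h.comp (tendsto_add_atTop_nat 1))
  · refine tendsto_const_nhds.congr fun k => ?_
    rw [Matrix.mulVec_mulVec, ← Units.val_pow_eq_pow_val, ← Units.val_pow_eq_pow_val, inv_pow,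
      Units.mul_inv, Matrix.one_mulVec]

theorem stmt13 (l : ℕ) (B : Matrix (Fin l) (Fin l) ℂ)
    (hB : ∀ μ ∈ spectrum ℂ B, 1 < ‖μ‖) :
    matJ B 0 = Set.univ := by
  obtain ⟨u, rfl⟩ : IsUnit B :=
    spectrum.isUnit_of_zero_notMem ℂ fun h0 => absurd (hB 0 h0) (by norm_num)
  exact matJ_zero_eq_univ_of_tendsto_inv_pow u
    (Matrix.tendsto_pow_atTop_nhds_zero_of_forall_norm_lt_one _
      fun _ hμ => norm_lt_one_of_mem_spectrum_inv hB hμ)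
end

section
/- Let A be the l×l Jordan block over ℂ with eigenvalue λ, |λ| = 1, where l = 2r, and let x ∈ ℂ^l. Then J(x) is nonempty if and only if x_{r+1} = ⋯ = x_l = 0, and in this case J(x) = ℂ^r × {0}^r. -/
open Filter Topology

/-!
Write `v = (s, u)` for the upper and lower halves of `v ∈ ℂ^(2r)`. The upper half of `A^k v` is
`J^k s` plus a Hankel block with entries `C(k, r-i+m) λ^(k-r+i-m)` applied to `u`, where `J` is
the `r × r` Jordan block, and the lower half is `J^k u`. Scaling row `i` by `k^-(r-i) λ^-k` and
column `m` by `k^m` turns the Hankel block into a matrix converging to `(λ^-(r-i+m) / (r-i+m)!)`,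
which is invertible: a polynomial of degree `< 2r` with `r`-fold zeros at `0` and `1` vanishes.

If `z_n → x` and `A^(k_n) z_n → y`, the upper halves stay bounded, so the scaled residual of the
upper half is `O(1/k_n)`; inverting the limit matrix, `k_n^m (z_n)_(r+m) → 0`, which forces the
lower halves of `x` and of `y` to vanish. Conversely, for `x` and `y` with vanishing lower halves,
solving the scaled Hankel system gives a small correction of the lower half of `x` that makes the
upper half of `A^k z` exactly that of `y`, while the lower half of `A^k z` tends to `0`.
-/

open Finset Matrix

lemma choose_le_pow_of_le {k j n : ℕ} (hk : 1 ≤ k) (h : j ≤ n) : (k.choose j : ℝ) ≤ (k : ℝ) ^ n :=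
  calc (k.choose j : ℝ) ≤ (k : ℝ) ^ j := by exact_mod_cast Nat.choose_le_pow k j
    _ ≤ (k : ℝ) ^ n := pow_le_pow_right₀ (by exact_mod_cast hk) h

lemma tendsto_choose_mul_inv_pow (n : ℕ) :
    Tendsto (fun k : ℕ => (k.choose n : ℂ) * (k : ℂ)⁻¹ ^ n) atTop (𝓝 (n.factorial : ℂ)⁻¹) := by
  have hreal := ProbabilityTheory.tendsto_choose_mul_pow_atTop (p := fun k : ℕ => (k : ℝ)⁻¹) n
    (tendsto_const_nhds (x := (1 : ℝ)) |>.congr' (by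
      filter_upwards [eventually_ne_atTop 0] with k hk
      field_simp))
  have := hreal.ofReal
  push_cast at this
  simpa using this

open Polynomial in
lemma eq_zero_of_forall_sum_div_factorial_eq_zero {r : ℕ} (d : Fin r → ℂ)
    (h : ∀ i : Fin r, ∑ m : Fin r, d m / ((r - i + m).factorial : ℂ) = 0) : d = 0 := by
  rcases Nat.eq_zero_or_pos r with rfl | hr
  · exact Subsingleton.elim _ _
  set f : ℂ[X] := ∑ m : Fin r, C (d m / ((r + m).factorial : ℂ)) * X ^ (r + m) with hf_def
  have hcoeff (m : Fin r) : f.coeff (r + m) = d m / ((r + m).factorial : ℂ) := by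
    simp only [hf_def, finsetSum_coeff, coeff_C_mul_X_pow]
    rw [sum_eq_single m (fun m' _ hm' => if_neg (by omega)) (by simp), if_pos rfl]
  have hdeg : f.natDegree ≤ 2 * r - 1 :=
    natDegree_sum_le_of_forall_le _ _ fun m _ => (natDegree_C_mul_X_pow_le _ _).trans (by omega)
  have hX : X ^ r ∣ f := dvd_sum fun m _ => (Dvd.intro _ (pow_add X r m).symm).mul_left _
  have hX1 (hf : f ≠ 0) : (X - C 1) ^ r ∣ f := by
    obtain ⟨n, rfl⟩ : ∃ n, r = n + 1 := ⟨r - 1, by omega⟩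
    refine (le_rootMultiplicity_iff hf).mp (Nat.succ_le_of_lt
      ((lt_rootMultiplicity_iff_isRoot_iterate_derivative hf).mpr fun i hi => ?_))
    rw [IsRoot, hf_def, iterate_derivative_sum, eval_finsetSum, ← h ⟨i, by omega⟩]
    refine sum_congr rfl fun m _ => ?_
    have hfac := Nat.factorial_mul_descFactorial (show i ≤ n + 1 + m by omega)
    rw [show n + 1 - i + m = n + 1 + m - i by omega, iterate_derivative_C_mul,
      iterate_derivative_X_pow_eq_C_mul, eval_mul, eval_mul, eval_C, eval_C, eval_pow, eval_X,
      one_pow, mul_one, ← hfac]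
    have hdesc : ((n + 1 + m).descFactorial i : ℂ) ≠ 0 :=
      Nat.cast_ne_zero.mpr (Nat.descFactorial_eq_zero_iff_lt.not.mpr (by omega))
    push_cast
    rw [div_mul_eq_div_div, div_mul_cancel₀ _ hdesc]
  have hf : f = 0 := by
    by_contra hf
    have hdvd := (IsCoprime.pow (isCoprime_X_sub_C_of_isUnit_sub (a := 0) (b := 1)
      (by simp))).mul_dvd (by simpa using hX) (hX1 hf)
    have := natDegree_le_of_dvd hdvd hf
    rw [natDegree_mul (pow_ne_zero _ (X_sub_C_ne_zero 0)) (pow_ne_zero _ (X_sub_C_ne_zero 1)),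
      natDegree_pow, natDegree_pow, natDegree_X_sub_C, natDegree_X_sub_C] at this
    omega
  ext m
  simpa [hf, Nat.factorial_ne_zero] using (hcoeff m).symm

lemma tendsto_nonsing_inv_mulVec {𝕜 n ι : Type*} [NormedField 𝕜] [Fintype n] [DecidableEq n]
    {l : Filter ι} {M : ι → Matrix n n 𝕜} {M₀ : Matrix n n 𝕜} (hM : Tendsto M l (𝓝 M₀))
    (hM₀ : M₀.det ≠ 0) {b : ι → n → 𝕜} (hb : Tendsto b l (𝓝 0)) :
    Tendsto (fun i => (M i)⁻¹ *ᵥ b i) l (𝓝 0) := by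
  have hinv : Tendsto (fun i => (M i)⁻¹) l (𝓝 M₀⁻¹) :=
    (continuousAt_matrix_inv M₀ (by rw [Ring.inverse_eq_inv']; exact continuousAt_inv₀ hM₀)
      ).tendsto.comp hM
  have := ((continuous_fst.matrix_mulVec continuous_snd).tendsto (M₀⁻¹, 0)).comp
    (hinv.prodMk_nhds hb)
  rw [mulVec_zero] at this
  exact this

lemma tendsto_zero_of_tendsto_mulVec {𝕜 n ι : Type*} [NormedField 𝕜] [Fintype n] [DecidableEq n]
    {l : Filter ι} {M : ι → Matrix n n 𝕜} {M₀ : Matrix n n 𝕜} (hM : Tendsto M l (𝓝 M₀))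
    (hM₀ : M₀.det ≠ 0) {u : ι → n → 𝕜} (hu : Tendsto (fun i => M i *ᵥ u i) l (𝓝 0)) :
    Tendsto u l (𝓝 0) := by
  refine (tendsto_nonsing_inv_mulVec hM hM₀ hu).congr' ?_
  filter_upwards [((continuous_id.matrix_det.tendsto M₀).comp hM).eventually_ne hM₀] with i hi
  simp only [Function.comp_apply, id] at hi
  rw [mulVec_mulVec, nonsing_inv_mul _ (isUnit_iff_ne_zero.mpr hi), one_mulVec]

section JordanPower

variable {l : ℕ} {lam : ℂ}

def padVec {α : Type*} [Zero α] (v : Fin l → α) (n : ℕ) : α :=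
  if h : n < l then v ⟨n, h⟩ else 0

lemma padVec_coe {α : Type*} [Zero α] (v : Fin l → α) (i : Fin l) : padVec v i = v i := by
  simp [padVec]

lemma padVec_of_le {α : Type*} [Zero α] (v : Fin l → α) {n : ℕ} (h : l ≤ n) : padVec v n = 0 := by
  simp [padVec, not_lt.mpr h]

lemma padVec_jordanBlock_mulVec (v : Fin l → ℂ) (n : ℕ) :
    padVec (jordanBlock l lam *ᵥ v) n = lam * padVec v n + padVec v (n + 1) := by
  unfold padVec
  split_ifs with hn hn1
  · rw [mulVec, dotProduct, sum_eq_add (⟨n, hn⟩ : Fin l) ⟨n + 1, hn1⟩ (by simp)]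
    · simp [jordanBlock]
    · intro j _ hj
      simp only [jordanBlock, of_apply]
      rw [if_neg (fun h => hj.1 h), if_neg (fun h => hj.2 (Fin.ext h)), zero_mul]
    · simp
    · simp
  · rw [mulVec, dotProduct, sum_eq_single (⟨n, hn⟩ : Fin l)]
    · simp [jordanBlock]
    · intro j _ hj
      simp only [jordanBlock, of_apply]
      rw [if_neg hj, if_neg (by omega), zero_mul]
    · simp
  · omega
  · simp

lemma jordanBlock_pow_mulVec_apply (hlam : lam ≠ 0) (k : ℕ) (v : Fin l → ℂ) (i : Fin l)
    {N : ℕ} (hN : l ≤ N) :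
    (jordanBlock l lam ^ k *ᵥ v) i =
      ∑ j ∈ range N, (k.choose j : ℂ) * lam ^ k * lam⁻¹ ^ j * padVec v (i + j) := by
  obtain ⟨M, rfl⟩ : ∃ M, N = M + 1 := ⟨N - 1, by have := i.isLt; omega⟩
  induction k generalizing v with
  | zero =>
    rw [sum_range_succ']
    simp [padVec_coe]
  | succ k ih =>
    rw [pow_succ, ← mulVec_mulVec, ih]
    simp_rw [padVec_jordanBlock_mulVec, mul_add, sum_add_distrib]
    rw [sum_range_succ' _ M, sum_range_succ _ M, sum_range_succ' _ M,
      padVec_of_le v (show l ≤ i + M + 1 by omega)]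
    simp only [Nat.choose_succ_succ', Nat.cast_add, Nat.choose_zero_right, add_zero, ← add_assoc,
      mul_zero, add_mul, sum_add_distrib]
    have hshift (c p : ℂ) (j : ℕ) :
        c * lam ^ (k + 1) * lam⁻¹ ^ (j + 1) * p = c * lam ^ k * lam⁻¹ ^ j * p := by
      rw [pow_succ, pow_succ]; field_simp
    have hcancel (c p : ℂ) (j : ℕ) :
        c * lam ^ k * lam⁻¹ ^ (j + 1) * (lam * p) = c * lam ^ k * lam⁻¹ ^ j * p := by
      rw [pow_succ]; field_simp
    simp only [hshift, hcancel]
    ring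

end JordanPower

section Halves

variable {r : ℕ} {α : Type*}

def upperHalf (v : Fin (2 * r) → α) : Fin r → α := fun i => v ⟨i, by omega⟩

def lowerHalf (v : Fin (2 * r) → α) : Fin r → α := fun i => v ⟨r + i, by omega⟩

def glueHalves (s u : Fin r → α) : Fin (2 * r) → α :=
  fun j => if h : (j : ℕ) < r then s ⟨j, h⟩ else u ⟨j - r, by omega⟩

@[simp] lemma upperHalf_glueHalves (s u : Fin r → α) : upperHalf (glueHalves s u) = s := by
  ext i; simp [upperHalf, glueHalves]

@[simp] lemma lowerHalf_glueHalves (s u : Fin r → α) : lowerHalf (glueHalves s u) = u := by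
  ext i; simp [lowerHalf, glueHalves]

@[simp] lemma glueHalves_upperHalf_lowerHalf (v : Fin (2 * r) → α) :
    glueHalves (upperHalf v) (lowerHalf v) = v := by
  ext j
  unfold glueHalves upperHalf lowerHalf
  split_ifs with h
  · rfl
  · congr 1; ext; simp only; omega

lemma continuous_glueHalves [TopologicalSpace α] :
    Continuous fun p : (Fin r → α) × (Fin r → α) => glueHalves p.1 p.2 := by
  refine continuous_pi fun j => ?_
  unfold glueHalves
  split_ifs <;> fun_prop

lemma continuous_upperHalf [TopologicalSpace α] : Continuous (upperHalf : (Fin (2 * r) → α) → _) :=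
  continuous_pi fun _ => continuous_apply _

lemma continuous_lowerHalf [TopologicalSpace α] : Continuous (lowerHalf : (Fin (2 * r) → α) → _) :=
  continuous_pi fun _ => continuous_apply _

lemma lowerHalf_eq_zero_iff [Zero α] (v : Fin (2 * r) → α) :
    lowerHalf v = 0 ↔ ∀ j : Fin (2 * r), r ≤ (j : ℕ) → v j = 0 := by
  refine ⟨fun h j hj => ?_, fun h => funext fun i => h _ (by simp)⟩
  simpa [lowerHalf, Nat.add_sub_cancel' hj] using congrFun h ⟨j - r, by omega⟩

lemma padVec_eq_padVec_upperHalf_of_lt [Zero α] (v : Fin (2 * r) → α) {n : ℕ} (hn : n < r) :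
    padVec v n = padVec (upperHalf v) n := by
  simp [padVec, hn, upperHalf, show n < 2 * r by omega]

lemma padVec_add_eq_padVec_lowerHalf [Zero α] (v : Fin (2 * r) → α) (n : ℕ) :
    padVec v (r + n) = padVec (lowerHalf v) n := by
  by_cases hn : n < r
  · simp [padVec, hn, lowerHalf, show r + n < 2 * r by omega]
  · rw [padVec_of_le _ (by omega), padVec_of_le _ (by omega)]

end Halves

section Blocks

variable {r : ℕ} {lam : ℂ}

lemma lowerHalf_jordanBlock_pow_mulVec (hlam : lam ≠ 0) (k : ℕ) (v : Fin (2 * r) → ℂ) :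
    lowerHalf (jordanBlock (2 * r) lam ^ k *ᵥ v) = jordanBlock r lam ^ k *ᵥ lowerHalf v := by
  ext m
  rw [lowerHalf, jordanBlock_pow_mulVec_apply hlam k v _ le_rfl,
    jordanBlock_pow_mulVec_apply hlam k _ m (show r ≤ 2 * r by omega)]
  simp only [add_assoc, padVec_add_eq_padVec_lowerHalf]

lemma upperHalf_jordanBlock_pow_mulVec (hlam : lam ≠ 0) (k : ℕ) (v : Fin (2 * r) → ℂ)
    (i : Fin r) :
    upperHalf (jordanBlock (2 * r) lam ^ k *ᵥ v) i = (jordanBlock r lam ^ k *ᵥ upperHalf v) i +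
      ∑ m : Fin r, (k.choose (r - i + m) : ℂ) * lam ^ k * lam⁻¹ ^ (r - i + m) * lowerHalf v m := by
  rw [upperHalf, jordanBlock_pow_mulVec_apply hlam k v _ (N := (r - i) + (r + i)) (by omega),
    jordanBlock_pow_mulVec_apply hlam k _ i (N := (r - i) + (r + i)) (by omega),
    sum_range_add _ (r - i) (r + i), sum_range_add _ (r - i) (r + i), add_assoc]
  dsimp only
  congr 1
  · exact sum_congr rfl fun j hj => by
      rw [padVec_eq_padVec_upperHalf_of_lt v (by simp only [mem_range] at hj; omega)]
  · have hshift (m : ℕ) : (i : ℕ) + (r - i + m) = r + m := by omega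
    simp only [hshift, padVec_add_eq_padVec_lowerHalf,
      padVec_of_le (upperHalf v) (Nat.le_add_right r _), mul_zero, sum_const_zero, zero_add]
    rw [sum_range_add _ r i]
    simp only [padVec_of_le (lowerHalf v) (Nat.le_add_right r _), mul_zero, sum_const_zero,
      add_zero, ← Fin.sum_univ_eq_sum_range, padVec_coe]

end Blocks

noncomputable section Hankel

variable {r : ℕ} {lam : ℂ}

variable (r lam) in
def binomHankel (k : ℕ) : Matrix (Fin r) (Fin r) ℂ :=
  of fun i m => (k.choose (r - i + m) : ℂ) * (k : ℂ)⁻¹ ^ (r - i + m) * lam⁻¹ ^ (r - i + m)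

variable (r lam) in
def factorialHankel : Matrix (Fin r) (Fin r) ℂ :=
  of fun i m => ((r - i + m).factorial : ℂ)⁻¹ * lam⁻¹ ^ (r - i + m)

def powWeight (k : ℕ) (u : Fin r → ℂ) : Fin r → ℂ := fun m => (k : ℂ) ^ (m : ℕ) * u m

variable (lam) in
def scaledResidual (k : ℕ) (a s : Fin r → ℂ) : Fin r → ℂ :=
  fun i => (k : ℂ)⁻¹ ^ (r - i) * lam⁻¹ ^ k * (a i - (jordanBlock r lam ^ k *ᵥ s) i)

lemma binomHankel_mulVec_powWeight_lowerHalf (hlam : lam ≠ 0) {k : ℕ} (hk : k ≠ 0)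
    (v : Fin (2 * r) → ℂ) :
    binomHankel r lam k *ᵥ powWeight k (lowerHalf v) =
      scaledResidual lam k (upperHalf (jordanBlock (2 * r) lam ^ k *ᵥ v)) (upperHalf v) := by
  ext i
  have hkC : (k : ℂ) ≠ 0 := Nat.cast_ne_zero.mpr hk
  rw [scaledResidual, upperHalf_jordanBlock_pow_mulVec hlam, add_sub_cancel_left, mul_sum, mulVec,
    dotProduct]
  refine sum_congr rfl fun m _ => ?_
  simp only [binomHankel, powWeight, of_apply, pow_add, inv_pow]
  field_simp

lemma scaledResidual_left_injective (hlam : lam ≠ 0) {k : ℕ} (hk : k ≠ 0) (s : Fin r → ℂ) :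
    Function.Injective fun a => scaledResidual lam k a s := by
  intro a b hab
  ext i
  have := congrFun hab i
  simp only [scaledResidual] at this
  have := mul_left_cancel₀ (by positivity) this
  simpa using this

lemma factorialHankel_det_ne_zero (hlam : lam ≠ 0) : (factorialHankel r lam).det ≠ 0 := by
  intro hdet
  obtain ⟨v, hv0, hv⟩ := exists_mulVec_eq_zero_iff.mpr hdet
  refine hv0 (funext fun m => ?_)
  have hd := eq_zero_of_forall_sum_div_factorial_eq_zero (fun m => lam⁻¹ ^ (m : ℕ) * v m)
    fun i => by
      have hi := congrFun hv i
      simp only [mulVec, dotProduct, factorialHankel, of_apply, pow_add, Pi.zero_apply] at hi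
      refine (mul_eq_zero.mp ?_).resolve_left (pow_ne_zero (r - i) (inv_ne_zero hlam))
      rw [← hi, mul_sum]
      exact sum_congr rfl fun m _ => by ring
  simpa [hlam] using congrFun hd m

lemma tendsto_binomHankel : Tendsto (binomHankel r lam) atTop (𝓝 (factorialHankel r lam)) :=
  tendsto_pi_nhds.mpr fun i => tendsto_pi_nhds.mpr fun m =>
    (tendsto_choose_mul_inv_pow (r - i + m)).mul_const _

lemma eventually_det_binomHankel_ne_zero (hlam : lam ≠ 0) :
    ∀ᶠ k in atTop, (binomHankel r lam k).det ≠ 0 :=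
  ((continuous_id.matrix_det.tendsto _).comp tendsto_binomHankel).eventually_ne
    (factorialHankel_det_ne_zero hlam)

end Hankel

section Estimates

variable {r : ℕ} {lam : ℂ}

lemma norm_padVec_le {l : ℕ} (v : Fin l → ℂ) (n : ℕ) : ‖padVec v n‖ ≤ ‖v‖ := by
  unfold padVec
  split_ifs
  · exact norm_le_pi_norm v _
  · simp

lemma padVec_powWeight (k : ℕ) (u : Fin r → ℂ) (n : ℕ) :
    padVec (powWeight k u) n = (k : ℂ) ^ n * padVec u n := by
  unfold padVec powWeight
  split_ifs <;> simp

lemma norm_jordanBlock_pow_mulVec_apply_le (hlam : ‖lam‖ = 1) (k : ℕ) (s : Fin r → ℂ)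
    (i : Fin r) :
    ‖(jordanBlock r lam ^ k *ᵥ s) i‖ ≤ ∑ j ∈ range r, (k.choose j : ℝ) * ‖padVec s (i + j)‖ := by
  have hlam0 : lam ≠ 0 := norm_ne_zero_iff.mp (by simp [hlam])
  rw [jordanBlock_pow_mulVec_apply hlam0 k s i le_rfl]
  refine (norm_sum_le _ _).trans (sum_le_sum fun j _ => ?_)
  simp [hlam]

lemma norm_jordanBlock_pow_mulVec_apply_le_pow (hlam : ‖lam‖ = 1) {k : ℕ} (hk : 1 ≤ k)
    (s : Fin r → ℂ) (i : Fin r) :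
    ‖(jordanBlock r lam ^ k *ᵥ s) i‖ ≤ r * ((k : ℝ) ^ (r - 1 - i) * ‖s‖) := by
  refine (norm_jordanBlock_pow_mulVec_apply_le hlam k s i).trans ?_
  refine (sum_le_sum (g := fun _ => (k : ℝ) ^ (r - 1 - i) * ‖s‖) fun j _ => ?_).trans_eq
    (by rw [sum_const, card_range, nsmul_eq_mul])
  by_cases hj : i + j < r
  · gcongr
    · exact choose_le_pow_of_le hk (by omega)
    · exact norm_padVec_le s _
  · rw [padVec_of_le s (by omega), norm_zero, mul_zero]
    positivity

lemma norm_jordanBlock_pow_mulVec_le_powWeight (hlam : ‖lam‖ = 1) {k : ℕ} (hk : 1 ≤ k)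
    (u : Fin r → ℂ) :
    ‖jordanBlock r lam ^ k *ᵥ u‖ ≤ r * ‖powWeight k u‖ := by
  refine pi_norm_le_iff_of_nonneg (by positivity) |>.mpr fun i => ?_
  refine (norm_jordanBlock_pow_mulVec_apply_le hlam k u i).trans ?_
  refine (sum_le_sum (g := fun _ => ‖powWeight k u‖) fun j _ => ?_).trans_eq
    (by rw [sum_const, card_range, nsmul_eq_mul])
  calc (k.choose j : ℝ) * ‖padVec u (i + j)‖ ≤ (k : ℝ) ^ (i + j) * ‖padVec u (i + j)‖ := by
        gcongr
        exact choose_le_pow_of_le hk (by omega)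
    _ = ‖padVec (powWeight k u) (i + j)‖ := by simp [padVec_powWeight]
    _ ≤ ‖powWeight k u‖ := norm_padVec_le _ _

lemma norm_le_norm_powWeight {k : ℕ} (hk : 1 ≤ k) (u : Fin r → ℂ) : ‖u‖ ≤ ‖powWeight k u‖ := by
  refine pi_norm_le_iff_of_nonneg (norm_nonneg _) |>.mpr fun m => ?_
  refine le_trans ?_ (norm_le_pi_norm (powWeight k u) m)
  simpa [powWeight] using le_mul_of_one_le_left (norm_nonneg (u m))
    (one_le_pow₀ (by exact_mod_cast hk : (1 : ℝ) ≤ k))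

lemma norm_scaledResidual_le (hlam : ‖lam‖ = 1) {k : ℕ} (hk : 1 ≤ k) (a s : Fin r → ℂ) :
    ‖scaledResidual lam k a s‖ ≤ (‖a‖ + r * ‖s‖) / k := by
  have hkR : (1 : ℝ) ≤ k := by exact_mod_cast hk
  refine pi_norm_le_iff_of_nonneg (by positivity) |>.mpr fun i => ?_
  have hri : r - i = (r - 1 - i) + 1 := by omega
  have hkpow : (k : ℝ)⁻¹ ^ (r - 1 - i) * (k : ℝ) ^ (r - 1 - i) = 1 := by
    rw [inv_pow, inv_mul_cancel₀ (by positivity)]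
  calc ‖scaledResidual lam k a s i‖
      ≤ (k : ℝ)⁻¹ ^ (r - i) * (‖a‖ + r * ((k : ℝ) ^ (r - 1 - i) * ‖s‖)) := by
        simp only [scaledResidual, norm_mul, norm_pow, norm_inv, hlam, inv_one, one_pow, mul_one,
          Complex.norm_natCast]
        gcongr
        exact (norm_sub_le _ _).trans (add_le_add (norm_le_pi_norm a i)
          (norm_jordanBlock_pow_mulVec_apply_le_pow hlam hk s i))
    _ = (k : ℝ)⁻¹ * ((k : ℝ)⁻¹ ^ (r - 1 - i) * ‖a‖ + r * ‖s‖) := by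
        rw [hri, pow_succ]
        linear_combination (k : ℝ)⁻¹ * r * ‖s‖ * hkpow
    _ ≤ (k : ℝ)⁻¹ * (1 * ‖a‖ + r * ‖s‖) := by
        gcongr
        exact pow_le_one₀ (by positivity) (inv_le_one_of_one_le₀ hkR)
    _ = (‖a‖ + r * ‖s‖) / k := by ring

lemma tendsto_scaledResidual (hlam : ‖lam‖ = 1) {ι : Type*} {l : Filter ι} {k : ι → ℕ}
    (hk : Tendsto k l atTop) {a s : ι → Fin r → ℂ} {a₀ s₀ : Fin r → ℂ}
    (ha : Tendsto a l (𝓝 a₀)) (hs : Tendsto s l (𝓝 s₀)) :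
    Tendsto (fun n => scaledResidual lam (k n) (a n) (s n)) l (𝓝 0) := by
  refine squeeze_zero_norm' ?_ ((ha.norm.add (hs.norm.const_mul (r : ℝ))).div_atTop
    (tendsto_natCast_atTop_atTop.comp hk))
  filter_upwards [hk.eventually_ge_atTop 1] with n hn
  exact norm_scaledResidual_le hlam hn _ _

lemma tendsto_zero_of_tendsto_powWeight {ι : Type*} {l : Filter ι} {k : ι → ℕ}
    (hk : ∀ n, 1 ≤ k n) {u : ι → Fin r → ℂ}
    (hw : Tendsto (fun n => powWeight (k n) (u n)) l (𝓝 0)) : Tendsto u l (𝓝 0) :=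
  squeeze_zero_norm (fun n => norm_le_norm_powWeight (hk n) _) (tendsto_norm_zero.comp hw)

lemma tendsto_jordanBlock_pow_mulVec_of_powWeight (hlam : ‖lam‖ = 1) {ι : Type*} {l : Filter ι}
    {k : ι → ℕ} (hk : ∀ n, 1 ≤ k n) {u : ι → Fin r → ℂ}
    (hw : Tendsto (fun n => powWeight (k n) (u n)) l (𝓝 0)) :
    Tendsto (fun n => jordanBlock r lam ^ k n *ᵥ u n) l (𝓝 0) :=
  squeeze_zero_norm (fun n => norm_jordanBlock_pow_mulVec_le_powWeight hlam (hk n) _)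
    (by simpa using (tendsto_norm_zero.comp hw).const_mul (r : ℝ))

end Estimates

section LimitSet

variable {r : ℕ} {lam : ℂ}

lemma lowerHalf_eq_zero_of_mem_matJ (hlam : ‖lam‖ = 1) {x y : Fin (2 * r) → ℂ}
    (hy : y ∈ matJ (jordanBlock (2 * r) lam) x) : lowerHalf x = 0 ∧ lowerHalf y = 0 := by
  have hlam0 : lam ≠ 0 := norm_ne_zero_iff.mp (by simp [hlam])
  obtain ⟨k, z, hmono, hk0, hz, hAz⟩ := hy
  have hk1 (n : ℕ) : 1 ≤ k n := hk0.trans_le (hmono.monotone (Nat.zero_le n))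
  have hk : Tendsto k atTop atTop := hmono.tendsto_atTop
  have hw : Tendsto (fun n => powWeight (k n) (lowerHalf (z n))) atTop (𝓝 0) := by
    refine tendsto_zero_of_tendsto_mulVec (tendsto_binomHankel.comp hk)
      (factorialHankel_det_ne_zero hlam0) ?_
    simp only [Function.comp_apply,
      binomHankel_mulVec_powWeight_lowerHalf hlam0 (Nat.one_le_iff_ne_zero.mp (hk1 _))]
    exact tendsto_scaledResidual hlam hk ((continuous_upperHalf.tendsto y).comp hAz)
      ((continuous_upperHalf.tendsto x).comp hz)
  constructor
  · exact tendsto_nhds_unique ((continuous_lowerHalf.tendsto x).comp hz)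
      (tendsto_zero_of_tendsto_powWeight hk1 hw)
  · refine tendsto_nhds_unique ((continuous_lowerHalf.tendsto y).comp hAz) ?_
    simpa only [Function.comp_def, lowerHalf_jordanBlock_pow_mulVec hlam0] using
      tendsto_jordanBlock_pow_mulVec_of_powWeight hlam hk1 hw

lemma mem_matJ_of_lowerHalf_eq_zero (hlam : ‖lam‖ = 1) {x y : Fin (2 * r) → ℂ}
    (hx : lowerHalf x = 0) (hy : lowerHalf y = 0) : y ∈ matJ (jordanBlock (2 * r) lam) x := by
  have hlam0 : lam ≠ 0 := norm_ne_zero_iff.mp (by simp [hlam])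
  have hk : Tendsto (fun n : ℕ => n + 1) atTop atTop := tendsto_add_atTop_nat 1
  set v : ℕ → Fin r → ℂ := fun n => (binomHankel r lam (n + 1))⁻¹ *ᵥ
    scaledResidual lam (n + 1) (upperHalf y) (upperHalf x) with hv_def
  set u : ℕ → Fin r → ℂ := fun n m => ((n + 1 : ℕ) : ℂ)⁻¹ ^ (m : ℕ) * v n m
  have hwu (n : ℕ) : powWeight (n + 1) (u n) = v n := by
    ext m
    simp only [powWeight, u, inv_pow]
    field_simp
  have hw : Tendsto (fun n => powWeight (n + 1) (u n)) atTop (𝓝 0) := by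
    simp only [hwu]
    exact tendsto_nonsing_inv_mulVec (tendsto_binomHankel.comp hk)
      (factorialHankel_det_ne_zero hlam0)
      (tendsto_scaledResidual hlam hk tendsto_const_nhds tendsto_const_nhds)
  have hk1 (n : ℕ) : 1 ≤ n + 1 := Nat.le_add_left 1 n
  set w : ℕ → Fin (2 * r) → ℂ := fun n =>
    jordanBlock (2 * r) lam ^ (n + 1) *ᵥ glueHalves (upperHalf x) (u n)
  have hup : ∀ᶠ n in atTop, upperHalf (w n) = upperHalf y := by
    filter_upwards [hk.eventually (eventually_det_binomHankel_ne_zero (r := r) hlam0)] with n hn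
    refine scaledResidual_left_injective hlam0 (Nat.add_one_ne_zero n) (upperHalf x) ?_
    have := binomHankel_mulVec_powWeight_lowerHalf hlam0 (Nat.add_one_ne_zero n)
      (glueHalves (upperHalf x) (u n))
    dsimp only
    simp only [upperHalf_glueHalves, lowerHalf_glueHalves, hwu, hv_def] at this
    rw [← this, mulVec_mulVec, mul_nonsing_inv _ (isUnit_iff_ne_zero.mpr hn), one_mulVec]
  have hlow : Tendsto (fun n => lowerHalf (w n)) atTop (𝓝 0) := by
    simpa only [w, lowerHalf_jordanBlock_pow_mulVec hlam0, lowerHalf_glueHalves] using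
      tendsto_jordanBlock_pow_mulVec_of_powWeight hlam hk1 hw
  refine ⟨fun n => n + 1, fun n => glueHalves (upperHalf x) (u n),
    strictMono_nat_of_lt_succ fun n => by omega, Nat.succ_pos 0, ?_, ?_⟩
  · simpa [Function.comp_def, ← hx] using (continuous_glueHalves.tendsto (upperHalf x, 0)).comp
      (tendsto_const_nhds.prodMk_nhds (tendsto_zero_of_tendsto_powWeight hk1 hw))
  · have := (continuous_glueHalves.tendsto (upperHalf y, 0)).comp
      ((tendsto_const_nhds.congr' (hup.mono fun n h => h.symm)).prodMk_nhds hlow)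
    simpa [Function.comp_def, ← hy] using this

end LimitSet

theorem stmt16 (r : ℕ) (lam : ℂ) (hlam : ‖lam‖ = 1) (x : Fin (2 * r) → ℂ) :
    ((matJ (jordanBlock (2 * r) lam) x).Nonempty ↔ ∀ i : Fin (2 * r), r ≤ (i : ℕ) → x i = 0) ∧
    ((∀ i : Fin (2 * r), r ≤ (i : ℕ) → x i = 0) →
      matJ (jordanBlock (2 * r) lam) x = {y | ∀ i : Fin (2 * r), r ≤ (i : ℕ) → y i = 0}) := by
  simp only [← lowerHalf_eq_zero_iff]
  refine ⟨⟨fun ⟨y, hy⟩ => (lowerHalf_eq_zero_of_mem_matJ hlam hy).1,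
    fun hx => ⟨0, mem_matJ_of_lowerHalf_eq_zero hlam hx rfl⟩⟩, fun hx => ?_⟩
  ext y
  exact ⟨fun hy => (lowerHalf_eq_zero_of_mem_matJ hlam hy).2, mem_matJ_of_lowerHalf_eq_zero hlam hx⟩
end

section
/- Let A be the 3×3 Jordan block over ℂ with eigenvalue λ, |λ| > 1. If x ∈ ℂ³ is nonzero then J(x) = ∅, while J(0) = ℂ³. -/
/-!
The inverse of `A` is `λ⁻¹ + N` with `N` nilpotent, so the binomial expansion of `A⁻ᵏ` has a
bounded number of terms `C(k, i) λ^(i-k) Nⁱ`, each tending to `0` because `|λ⁻¹| < 1`;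
hence `A⁻ᵏ → 0`. If `A^{k_n} z_n → y`, then `z_n = A^{-k_n} (A^{k_n} z_n) → 0`, so
`J(x) = ∅` for `x ≠ 0`; and for every `y` the points `z_n = A^{-n} y → 0` satisfy
`Aⁿ z_n = y`, so `J(0) = ℂ³`.
-/

open Filter Topology

open Matrix

theorem tendsto_choose_mul_pow_sub_atTop_nhds_zero {𝕜 : Type*} [NormedField 𝕜] {c : 𝕜}
    (hc : ‖c‖ < 1) (i : ℕ) :
    Tendsto (fun n => (n.choose i : 𝕜) * c ^ (n - i)) atTop (𝓝 0) := by
  rw [← tendsto_add_atTop_iff_nat i]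
  simpa using (summable_choose_mul_geometric_of_norm_lt_one i hc).tendsto_atTop_zero

section NilpotentPerturbation

variable {𝕜 R : Type*} [NormedField 𝕜] [Ring R] [Algebra 𝕜 R]
  [TopologicalSpace R] [ContinuousAdd R] [ContinuousSMul 𝕜 R]

theorem tendsto_pow_algebraMap_add_of_isNilpotent {c : 𝕜} (hc : ‖c‖ < 1) {N : R}
    (hN : IsNilpotent N) : Tendsto (fun n => (algebraMap 𝕜 R c + N) ^ n) atTop (𝓝 0) := by
  obtain ⟨m, hm⟩ := hN
  have hexpand : ∀ n ≥ m, (algebraMap 𝕜 R c + N) ^ n =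
      ∑ i ∈ Finset.range m, ((n.choose i : 𝕜) * c ^ (n - i)) • N ^ i := by
    intro n hn
    rw [add_comm, (Algebra.commute_algebraMap_right c N).add_pow]
    have hrange : Finset.range m ⊆ Finset.range (n + 1) := Finset.range_subset_range.2 (by omega)
    refine (Finset.sum_subset hrange fun i _ hi => ?_).symm.trans
      (Finset.sum_congr rfl fun i _ => ?_)
    · rw [pow_eq_zero_of_le (by simpa using hi) hm, zero_mul, zero_mul]
    · rw [← map_pow, ← map_natCast (algebraMap 𝕜 R), mul_assoc, ← map_mul, ← Algebra.commutes,
        ← Algebra.smul_def, mul_comm]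
  have hterm (i : ℕ) :
      Tendsto (fun n => ((n.choose i : 𝕜) * c ^ (n - i)) • N ^ i) atTop (𝓝 0) := by
    simpa using (tendsto_choose_mul_pow_sub_atTop_nhds_zero hc i).smul_const (N ^ i)
  have hsum := tendsto_finsetSum (Finset.range m) fun i _ => hterm i
  rw [Finset.sum_const_zero] at hsum
  exact hsum.congr' <| by
    filter_upwards [eventually_ge_atTop m] with n hn using (hexpand n hn).symm

end NilpotentPerturbation

section InversePowers

variable {l : ℕ} {A B : Matrix (Fin l) (Fin l) ℂ}

lemma pow_mul_pow_eq_one_of_mul_eq_one (hBA : B * A = 1) (k : ℕ) : B ^ k * A ^ k = 1 := by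
  have hcomm : Commute B A := hBA.trans (mul_eq_one_comm.mp hBA).symm
  rw [← hcomm.mul_pow, hBA, one_pow]

lemma tendsto_pow_mulVec_zero (hB : Tendsto (B ^ ·) atTop (𝓝 0)) {k : ℕ → ℕ}
    (hk : Tendsto k atTop atTop) {w : ℕ → Fin l → ℂ} {y : Fin l → ℂ}
    (hw : Tendsto w atTop (𝓝 y)) : Tendsto (fun n => B ^ k n *ᵥ w n) atTop (𝓝 0) := by
  have hmulVec : Tendsto (fun p : Matrix (Fin l) (Fin l) ℂ × (Fin l → ℂ) => p.1 *ᵥ p.2)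
      (𝓝 (0, y)) (𝓝 (0 *ᵥ y)) := (continuous_fst.matrix_mulVec continuous_snd).tendsto _
  simpa [Function.comp_def] using hmulVec.comp ((hB.comp hk).prodMk_nhds hw)

theorem matJ_eq_empty_of_tendsto_pow_zero (hBA : B * A = 1)
    (hB : Tendsto (B ^ ·) atTop (𝓝 0)) {x : Fin l → ℂ} (hx : x ≠ 0) : matJ A x = ∅ := by
  refine Set.eq_empty_of_forall_notMem fun y ⟨k, z, hk, _, hz, hAz⟩ => hx ?_
  refine tendsto_nhds_unique hz <|
    (tendsto_pow_mulVec_zero hB hk.tendsto_atTop hAz).congr fun n => ?_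
  rw [mulVec_mulVec, pow_mul_pow_eq_one_of_mul_eq_one hBA, one_mulVec]

theorem matJ_zero_eq_univ_of_tendsto_pow_zero (hBA : B * A = 1)
    (hB : Tendsto (B ^ ·) atTop (𝓝 0)) : matJ A 0 = Set.univ := by
  refine Set.eq_univ_of_forall fun y => ⟨(· + 1), fun n => B ^ (n + 1) *ᵥ y,
    add_left_strictMono, Nat.succ_pos 0,
    tendsto_pow_mulVec_zero hB (tendsto_add_atTop_nat 1) tendsto_const_nhds, ?_⟩
  refine tendsto_const_nhds.congr fun n => ?_
  rw [mulVec_mulVec, mul_eq_one_comm.mp (pow_mul_pow_eq_one_of_mul_eq_one hBA _),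
    one_mulVec]

end InversePowers

lemma jordanBlock_three (lam : ℂ) : jordanBlock 3 lam = !![lam, 1, 0; 0, lam, 1; 0, 0, lam] := by
  ext i j
  fin_cases i <;> fin_cases j <;> simp [jordanBlock]

lemma exists_isNilpotent_mul_jordanBlock_three_eq_one {lam : ℂ} (hlam : lam ≠ 0) :
    ∃ N : Matrix (Fin 3) (Fin 3) ℂ, IsNilpotent N ∧
      (algebraMap ℂ _ lam⁻¹ + N) * jordanBlock 3 lam = 1 := by
  -- `(lam + S)⁻¹ = lam⁻¹ - lam⁻² S + lam⁻³ S²` for the shift `S`, since `S³ = 0`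
  refine ⟨!![0, -lam⁻¹ ^ 2, lam⁻¹ ^ 3; 0, 0, -lam⁻¹ ^ 2; 0, 0, 0], ⟨3, ?_⟩, ?_⟩
  · ext i j
    fin_cases i <;> fin_cases j <;> simp [pow_succ, mul_apply, Fin.sum_univ_three]
  · rw [jordanBlock_three]
    ext i j
    fin_cases i <;> fin_cases j <;>
      simp [mul_apply, Fin.sum_univ_three, algebraMap_matrix_apply] <;> field_simp <;> ring

theorem stmt18 (lam : ℂ) (hlam : 1 < ‖lam‖) :
    (∀ x : Fin 3 → ℂ, x ≠ 0 → matJ (jordanBlock 3 lam) x = ∅) ∧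
    matJ (jordanBlock 3 lam) 0 = Set.univ := by
  have hlam0 : lam ≠ 0 := norm_pos_iff.mp (zero_lt_one.trans hlam)
  obtain ⟨N, hN, hBA⟩ := exists_isNilpotent_mul_jordanBlock_three_eq_one hlam0
  have hinv : ‖lam⁻¹‖ < 1 := by rw [norm_inv]; exact inv_lt_one_of_one_lt₀ hlam
  have hB := tendsto_pow_algebraMap_add_of_isNilpotent hinv hN
  exact ⟨fun _ hx => matJ_eq_empty_of_tendsto_pow_zero hBA hB hx,
    matJ_zero_eq_univ_of_tendsto_pow_zero hBA hB⟩
end
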